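/- arXiv:1706.08788 — 2 statements merged into one kernel-verified Lean document; each statement's English description precedes it below -/
import Mathlib

section
/- Let P be a non-empty bounded polyhedron in R^n, and for a cost vector c and perturbation δ in R^n define X(δ) as the set of minimizers of (c+δ)^T x over P. Then there exists ε > 0 such that for all δ with ‖δ‖ < ε, X(δ) ⊆ X(0). -/
open RealInnerProductSpace

/-- Robustness of LP minimizer sets against cost perturbation: for a nonempty
compact convex polyhedron (polytope) `P`, there is `ε > 0` such that for every
perturbation `δ` with `‖δ‖ < ε`, every minimizer of `(c+δ)ᵀx` over `P` is also
a minimizer of `cᵀx` over `P`. -/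
theorem stmt_0 {n : ℕ} (P : Set (EuclideanSpace ℝ (Fin n)))
    (hPne : P.Nonempty) (hPcomp : IsCompact P) (hPconv : Convex ℝ P)
    (hpoly : ∃ V : Finset (EuclideanSpace ℝ (Fin n)),
      P = convexHull ℝ (V : Set (EuclideanSpace ℝ (Fin n))))
    (c : EuclideanSpace ℝ (Fin n))
    (X : EuclideanSpace ℝ (Fin n) → Set (EuclideanSpace ℝ (Fin n)))
    (hX : ∀ δ, X δ = {x ∈ P | ∀ y ∈ P, ⟪c + δ, x⟫ ≤ ⟪c + δ, y⟫}) :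
    ∃ ε > 0, ∀ δ : EuclideanSpace ℝ (Fin n), ‖δ‖ < ε → X δ ⊆ X 0 := by
  classical
  obtain ⟨V, hV⟩ := hpoly
  have hVP : (V : Set (EuclideanSpace ℝ (Fin n))) ⊆ P := hV ▸ subset_convexHull ℝ _
  have hVne : V.Nonempty := by
    rcases hPne with ⟨x, hx⟩
    rw [hV, Finset.mem_convexHull'] at hx
    obtain ⟨w, _, hw1, _⟩ := hx
    rcases V.eq_empty_or_nonempty with h | h
    · simp [h] at hw1
    · exact h
  have hinner : ∀ (a : EuclideanSpace ℝ (Fin n)) (w : EuclideanSpace ℝ (Fin n) → ℝ),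
      ⟪a, ∑ v ∈ V, w v • v⟫ = ∑ v ∈ V, w v * ⟪a, v⟫ := by
    intro a w
    rw [inner_sum]
    exact Finset.sum_congr rfl fun v _ => real_inner_smul_right a v (w v)
  have hmin : ∀ (a : EuclideanSpace ℝ (Fin n)), ∀ y ∈ P, ∃ v ∈ V, ⟪a, v⟫ ≤ ⟪a, y⟫ := by
    intro a y hy
    rw [hV, Finset.mem_convexHull'] at hy
    obtain ⟨w, hw0, hw1, hwy⟩ := hy
    obtain ⟨v0, hv0, hv0min⟩ := V.exists_min_image (fun v => ⟪a, v⟫) hVne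
    refine ⟨v0, hv0, ?_⟩
    calc ⟪a, v0⟫ = ∑ v ∈ V, w v * ⟪a, v0⟫ := by rw [← Finset.sum_mul, hw1, one_mul]
    _ ≤ ∑ v ∈ V, w v * ⟪a, v⟫ := Finset.sum_le_sum fun v hv =>
        mul_le_mul_of_nonneg_left (hv0min v hv) (hw0 v hv)
    _ = ⟪a, y⟫ := by rw [← hinner, hwy]
  set m := V.inf' hVne (fun v => ⟪c, v⟫) with hm
  have hmle : ∀ v ∈ V, m ≤ ⟪c, v⟫ := fun v hv => Finset.inf'_le _ hv
  have hmP : ∀ y ∈ P, m ≤ ⟪c, y⟫ := by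
    intro y hy
    obtain ⟨v, hv, hle⟩ := hmin c y hy
    exact le_trans (hmle v hv) hle
  obtain ⟨vs, hvsV, hvsm⟩ := Finset.exists_mem_eq_inf' hVne (fun v => ⟪c, v⟫)
  rw [← hm] at hvsm
  set R := V.sup' hVne (fun v => ‖v‖) + 1 with hRdef
  have hR0 : 0 < R := by
    have h0 : (0:ℝ) ≤ V.sup' hVne (fun v => ‖v‖) := by
      obtain ⟨v, hv⟩ := hVne
      exact le_trans (norm_nonneg v) (Finset.le_sup' _ hv)
    rw [hRdef]; linarith
  have hnormR : ∀ v ∈ V, ‖v‖ ≤ R := by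
    intro v hv
    have h := Finset.le_sup' (fun v => ‖v‖) hv
    rw [hRdef]; linarith
  set T := V.filter (fun v => ⟪c, v⟫ ≠ m) with hT
  set g : ℝ := if hTne : T.Nonempty then T.inf' hTne (fun v => ⟪c, v⟫ - m) else 1 with hg
  have hg0 : 0 < g := by
    rw [hg]
    split_ifs with hTne
    · rw [Finset.lt_inf'_iff]
      intro v hv
      have hvV : v ∈ V := (Finset.mem_filter.1 hv).1
      have hne : ⟪c, v⟫ ≠ m := (Finset.mem_filter.1 hv).2
      have hle := hmle v hvV
      have : m < ⟪c, v⟫ := lt_of_le_of_ne hle (Ne.symm hne)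
      linarith
    · exact one_pos
  have hgle : ∀ v ∈ V, ⟪c, v⟫ ≠ m → m + g ≤ ⟪c, v⟫ := by
    intro v hv hne
    have hvT : v ∈ T := Finset.mem_filter.2 ⟨hv, hne⟩
    have hTne : T.Nonempty := ⟨v, hvT⟩
    have hle : T.inf' hTne (fun v => ⟪c, v⟫ - m) ≤ ⟪c, v⟫ - m :=
      Finset.inf'_le _ hvT
    rw [hg, dif_pos hTne]
    linarith
  clear_value m R g
  refine ⟨g / (2 * R), by positivity, ?_⟩
  intro δ hδ x hxδ
  rw [hX] at hxδ
  obtain ⟨hxP, hxopt⟩ := hxδ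
  rw [hX]
  refine ⟨hxP, ?_⟩
  have hδR : ‖δ‖ * R < g / 2 := by
    have h := mul_lt_mul_of_pos_right hδ hR0
    have hne : (R:ℝ) ≠ 0 := ne_of_gt hR0
    have : g / (2 * R) * R = g / 2 := by field_simp
    linarith
  have hδbound : ∀ v ∈ V, |⟪δ, v⟫| ≤ ‖δ‖ * R := by
    intro v hv
    calc |⟪δ, v⟫| ≤ ‖δ‖ * ‖v‖ := abs_real_inner_le_norm δ v
    _ ≤ ‖δ‖ * R := mul_le_mul_of_nonneg_left (hnormR v hv) (norm_nonneg δ)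
  have hvsP : vs ∈ P := hVP hvsV
  have hxval : ⟪c + δ, x⟫ ≤ ⟪c + δ, vs⟫ := hxopt vs hvsP
  have hxP' := hxP
  rw [hV, Finset.mem_convexHull'] at hxP'
  obtain ⟨w, hw0, hw1, hwx⟩ := hxP'
  have hsupp : ∀ v ∈ V, w v ≠ 0 → ⟪c, v⟫ = m := by
    intro v hvV hwv
    by_contra hne
    have hwvpos : 0 < w v := lt_of_le_of_ne (hw0 v hvV) (Ne.symm hwv)
    have h1 : m + g ≤ ⟪c, v⟫ := hgle v hvV hne
    have h2 : ⟪c + δ, vs⟫ < ⟪c + δ, v⟫ := by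
      have e1 : ⟪c + δ, vs⟫ = ⟪c, vs⟫ + ⟪δ, vs⟫ := inner_add_left c δ vs
      have e2 : ⟪c + δ, v⟫ = ⟪c, v⟫ + ⟪δ, v⟫ := inner_add_left c δ v
      have b1 := abs_le.1 (hδbound vs hvsV)
      have b2 := abs_le.1 (hδbound v hvV)
      have hb1 : ⟪δ, vs⟫ ≤ ‖δ‖ * R := b1.2
      have hb2 : -(‖δ‖ * R) ≤ ⟪δ, v⟫ := b2.1
      have hvs : ⟪c, vs⟫ = m := hvsm.symm
      rw [e1, e2, hvs]
      linarith
    have h3 : ∀ u ∈ V, ⟪c + δ, x⟫ ≤ ⟪c + δ, u⟫ := fun u hu => hxopt u (hVP hu)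
    have h4 : ⟪c + δ, x⟫ = ∑ u ∈ V, w u * ⟪c + δ, u⟫ := by
      rw [← hwx]; exact hinner _ w
    have h5 : ∑ u ∈ V, w u * ⟪c + δ, x⟫ < ∑ u ∈ V, w u * ⟪c + δ, u⟫ := by
      apply Finset.sum_lt_sum
      · intro u hu
        exact mul_le_mul_of_nonneg_left (h3 u hu) (hw0 u hu)
      · exact ⟨v, hvV, mul_lt_mul_of_pos_left (lt_of_le_of_lt hxval h2) hwvpos⟩
    rw [← Finset.sum_mul, hw1, one_mul, ← h4] at h5
    exact lt_irrefl _ h5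
  have hcx : ⟪c, x⟫ = m := by
    have e : ⟪c, x⟫ = ∑ v ∈ V, w v * ⟪c, v⟫ := by
      rw [← hwx]; exact hinner c w
    have e2 : ∀ v ∈ V, w v * ⟪c, v⟫ = w v * m := by
      intro v hv
      by_cases h : w v = 0
      · rw [h]; ring
      · rw [hsupp v hv h]
    rw [e, Finset.sum_congr rfl e2, ← Finset.sum_mul, hw1, one_mul]
  intro y hy
  have h1 : ⟪c + 0, x⟫ = ⟪c, x⟫ := by rw [add_zero]
  have h2 : ⟪c + 0, y⟫ = ⟪c, y⟫ := by rw [add_zero]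
  rw [h1, h2, hcx]
  exact hmP y hy
end

section
/- Let λ* ≥ 0 in R^p and suppose there exist points x̂ᵢ ∈ Cᵢ (i = 1,…,m) and ζ > 0 such that Σᵢ Aᵢ x̂ᵢ ≤ b − ρ − mζ𝟙, and suppose λ* satisfies the saddle-point inequality ‖λ*‖₁ ≤ (1/(mζ)) ( Σᵢ cᵢ^T x̂ᵢ + λ^T (b−ρ) − Σᵢ min_{xᵢ ∈ Xᵢ} (cᵢ + Aᵢ^T λ)^T xᵢ ) for λ = 0. Then ‖λ*‖₁ ≤ (1/ζ) · max_{i=1,…,m} ( max_{xᵢ∈Xᵢ} cᵢ^T xᵢ − min_{xᵢ∈Xᵢ} cᵢ^T xᵢ ). -/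
open Matrix

lemma aux_convex_le {k : ℕ} {X : Set (Fin k → ℝ)} (hcomp : IsCompact X)
    (hne : X.Nonempty) (c : Fin k → ℝ) {x : Fin k → ℝ}
    (hx : x ∈ convexHull ℝ X) :
    c ⬝ᵥ x ≤ sSup ((fun xi => c ⬝ᵥ xi) '' X) := by
  have hbdd : BddAbove ((fun xi => c ⬝ᵥ xi) '' X) :=
    (hcomp.image (by
      unfold dotProduct
      exact continuous_finset_sum _ fun j _ => (continuous_const.mul (continuous_apply j)))).bddAbove
  have hsub : convexHull ℝ X ⊆ {y | c ⬝ᵥ y ≤ sSup ((fun xi => c ⬝ᵥ xi) '' X)} := by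
    apply convexHull_min
    · intro y hy
      exact le_csSup hbdd ⟨y, hy, rfl⟩
    · intro a ha b hb s t hs ht hst
      simp only [Set.mem_setOf_eq] at *
      have : c ⬝ᵥ (s • a + t • b) = s * (c ⬝ᵥ a) + t * (c ⬝ᵥ b) := by
        simp [dotProduct_add, dotProduct_smul, smul_eq_mul]
      rw [this]
      calc s * (c ⬝ᵥ a) + t * (c ⬝ᵥ b)
          ≤ s * sSup ((fun xi => c ⬝ᵥ xi) '' X) + t * sSup ((fun xi => c ⬝ᵥ xi) '' X) :=
            add_le_add (mul_le_mul_of_nonneg_left ha hs)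
              (mul_le_mul_of_nonneg_left hb ht)
        _ = sSup ((fun xi => c ⬝ᵥ xi) '' X) := by rw [← add_mul, hst, one_mul]
  exact hsub hx

/-- Bound on the ℓ¹ norm of the dual optimizer: if `λ* ≥ 0` satisfies the
saddle-point inequality evaluated at `λ = 0`, and a Slater point exists, then
`‖λ*‖₁ ≤ (1/ζ) · maxᵢ (max_{x∈Xᵢ} cᵢᵀx − min_{x∈Xᵢ} cᵢᵀx)`. -/
theorem stmt_9 {m p : ℕ} (hm : 0 < m) (n : Fin m → ℕ)
    (X : ∀ i, Set (Fin (n i) → ℝ))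
    (hXne : ∀ i, (X i).Nonempty) (hXcomp : ∀ i, IsCompact (X i))
    (c : ∀ i, Fin (n i) → ℝ)
    (A : ∀ i, Matrix (Fin p) (Fin (n i)) ℝ)
    (b ρ : Fin p → ℝ) (ζ : ℝ) (hζ : 0 < ζ)
    (xhat : ∀ i, Fin (n i) → ℝ)
    (hxhat : ∀ i, xhat i ∈ convexHull ℝ (X i))
    (hSlater : ∀ j, ∑ i, (A i).mulVec (xhat i) j ≤ b j - ρ j - m * ζ)
    (lamstar : Fin p → ℝ) (hlam : ∀ j, 0 ≤ lamstar j)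
    (hsaddle : ∑ j, |lamstar j| ≤ (1 / (m * ζ)) *
      (∑ i, c i ⬝ᵥ xhat i - ∑ i, sInf ((fun xi => c i ⬝ᵥ xi) '' X i))) :
    ∑ j, |lamstar j| ≤ (1 / ζ) *
      Finset.univ.sup' (Finset.univ_nonempty_iff.mpr ⟨⟨0, hm⟩⟩)
        (fun i => sSup ((fun xi => c i ⬝ᵥ xi) '' X i)
                - sInf ((fun xi => c i ⬝ᵥ xi) '' X i)) := by
  set M := Finset.univ.sup' (Finset.univ_nonempty_iff.mpr ⟨⟨0, hm⟩⟩)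
      (fun i => sSup ((fun xi => c i ⬝ᵥ xi) '' X i)
              - sInf ((fun xi => c i ⬝ᵥ xi) '' X i)) with hM
  have hmR : (0:ℝ) < m := by exact_mod_cast hm
  have hmz : (0:ℝ) < m * ζ := mul_pos hmR hζ
  refine hsaddle.trans ?_
  have key : ∑ i, c i ⬝ᵥ xhat i - ∑ i, sInf ((fun xi => c i ⬝ᵥ xi) '' X i)
      ≤ m * M := by
    rw [← Finset.sum_sub_distrib]
    calc ∑ i, (c i ⬝ᵥ xhat i - sInf ((fun xi => c i ⬝ᵥ xi) '' X i))
        ≤ ∑ _i : Fin m, M := by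
          apply Finset.sum_le_sum
          intro i _
          have h1 : c i ⬝ᵥ xhat i ≤ sSup ((fun xi => c i ⬝ᵥ xi) '' X i) :=
            aux_convex_le (hXcomp i) (hXne i) (c i) (hxhat i)
          have h2 : sSup ((fun xi => c i ⬝ᵥ xi) '' X i)
              - sInf ((fun xi => c i ⬝ᵥ xi) '' X i) ≤ M :=
            hM ▸ Finset.le_sup'
              (fun i => sSup ((fun xi => c i ⬝ᵥ xi) '' X i)
                - sInf ((fun xi => c i ⬝ᵥ xi) '' X i)) (Finset.mem_univ i)
          linarith
      _ = m * M := by simp [mul_comm]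
  calc (1 / (m * ζ)) *
      (∑ i, c i ⬝ᵥ xhat i - ∑ i, sInf ((fun xi => c i ⬝ᵥ xi) '' X i))
      ≤ (1 / (m * ζ)) * (m * M) :=
        mul_le_mul_of_nonneg_left key (by positivity)
    _ = (1 / ζ) * M := by field_simp
end
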